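/- Let Λ be a skew-symmetric n×n integer matrix invertible over Q, and let T be the associated quantum torus over Z[q^{±1/2}]. Suppose g : T → T is a Z[q^{±1/2}]-linear map such that [g(x), y] = [x, g(y)] for all x, y ∈ T, and g(X^e) = k_e X^e for some scalar k_e ∈ Z[q^{±1/2}] for every e ∈ Z^n. Then there is a single scalar k₀ such that k_e = k₀ for all e ≠ 0. -/

import Mathlib

open Matrix LaurentPolynomial

/-!
Comparing coefficients of `X^{e+f}` in `[g X^e, X^f] = [X^e, g X^f]` gives
`(k_e - k_f)(q^{a/2} - q^{-a/2}) = 0` with `a = e Λ fᵀ`, so `k_e = k_f` whenever `e` and `f` pair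
nontrivially under `Λ`. Since `Λ` is nondegenerate, any two nonzero `e, e'` are linked this way,
either directly through a common partner or through the sum of their partners.
-/

theorem LaurentPolynomial.T_sub_T_neg_ne_zero {R : Type*} [Ring R] [Nontrivial R] {a : ℤ}
    (ha : a ≠ 0) : (T a - T (-a) : R[T;T⁻¹]) ≠ 0 := by
  intro h
  have hcoeff := congrArg (fun p : R[T;T⁻¹] => p.coeff a) h
  have hne : -a ≠ a := by omega
  simp [hne] at hcoeff

theorem smul_commutator_eq_of_eigenvector {R A : Type*} [CommSemiring R] [Ring A] [Algebra R A]
    (g : A → A) {x y : A} (hsym : g x * y - y * g x = x * g y - g y * x) {a c : R}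
    (hx : g x = a • x) (hy : g y = c • y) :
    a • (x * y - y * x) = c • (x * y - y * x) := by
  rw [hx, hy, smul_mul_assoc, mul_smul_comm, smul_mul_assoc, mul_smul_comm] at hsym
  rw [smul_sub, smul_sub, hsym]

theorem Matrix.Nondegenerate.exists_const_of_eq_of_dotProduct_mulVec_ne_zero
    {ι R β : Type*} [Fintype ι] [CommSemiring R] {Λ : Matrix ι ι R} (hΛ : Λ.Nondegenerate)
    (k : (ι → R) → β) (hk : ∀ e f, e ⬝ᵥ Λ *ᵥ f ≠ 0 → k e = k f) :
    ∃ k₀, ∀ e, e ≠ 0 → k e = k₀ := by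
  by_cases h : ∃ e₀ : ι → R, e₀ ≠ 0
  swap
  · push Not at h
    exact ⟨k 0, fun e he => absurd (h e) he⟩
  obtain ⟨e₀, he₀⟩ := h
  refine ⟨k e₀, fun e he => ?_⟩
  obtain ⟨u, hu⟩ := hΛ.exists_not_ortho_of_ne_zero he
  obtain ⟨v, hv⟩ := hΛ.exists_not_ortho_of_ne_zero he₀
  by_cases hev : e ⬝ᵥ Λ *ᵥ v = 0
  swap
  · exact (hk e v hev).trans (hk e₀ v hv).symm
  by_cases he₀u : e₀ ⬝ᵥ Λ *ᵥ u = 0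
  swap
  · exact (hk e u hu).trans (hk e₀ u he₀u).symm
  have hew : e ⬝ᵥ Λ *ᵥ (u + v) ≠ 0 := by
    rwa [mulVec_add, dotProduct_add, hev, add_zero]
  have he₀w : e₀ ⬝ᵥ Λ *ᵥ (u + v) ≠ 0 := by
    rwa [mulVec_add, dotProduct_add, he₀u, zero_add]
  exact (hk e _ hew).trans (hk e₀ _ he₀w).symm

theorem Matrix.nondegenerate_of_isUnit_det_map_intCast {ι : Type*} [Fintype ι] [DecidableEq ι]
    {Λ : Matrix ι ι ℤ} (h : IsUnit (Λ.map (Int.cast : ℤ → ℚ)).det) : Λ.Nondegenerate := by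
  rw [nondegenerate_iff_det_ne_zero, ← Int.cast_ne_zero (α := ℚ), Int.cast_det]
  exact h.ne_zero

section QuantumTorus

variable {ι : Type*} [Fintype ι] {Λ : Matrix ι ι ℤ} {A : Type*} [Ring A]
  [Algebra ℤ[T;T⁻¹] A] {b : Module.Basis (ι → ℤ) ℤ[T;T⁻¹] A}

theorem basis_commutator_eq (hΛ : Λᵀ = -Λ)
    (hmul : ∀ e f, b e * b f = (T (e ⬝ᵥ Λ *ᵥ f) : ℤ[T;T⁻¹]) • b (e + f)) (e f : ι → ℤ) :
    b e * b f - b f * b e = (T (e ⬝ᵥ Λ *ᵥ f) - T (-(e ⬝ᵥ Λ *ᵥ f)) : ℤ[T;T⁻¹]) • b (e + f) := by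
  have hskew : f ⬝ᵥ Λ *ᵥ e = -(e ⬝ᵥ Λ *ᵥ f) := by
    rw [dotProduct_mulVec, ← mulVec_transpose, hΛ, neg_mulVec, neg_dotProduct, dotProduct_comm]
  rw [hmul, hmul, hskew, add_comm f, sub_smul]

theorem eigenvalue_eq_of_dotProduct_mulVec_ne_zero (hΛ : Λᵀ = -Λ)
    (hmul : ∀ e f, b e * b f = (T (e ⬝ᵥ Λ *ᵥ f) : ℤ[T;T⁻¹]) • b (e + f))
    (g : A → A) (hsym : ∀ x y, g x * y - y * g x = x * g y - g y * x)
    (k : (ι → ℤ) → ℤ[T;T⁻¹]) (hdiag : ∀ e, g (b e) = k e • b e)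
    {e f : ι → ℤ} (hef : e ⬝ᵥ Λ *ᵥ f ≠ 0) : k e = k f := by
  have h := smul_commutator_eq_of_eigenvector g (hsym (b e) (b f)) (hdiag e) (hdiag f)
  rw [basis_commutator_eq hΛ hmul, smul_smul, smul_smul] at h
  have hcoeff := congrArg (fun x => b.repr x (e + f)) h
  simp only [map_smul, Module.Basis.repr_self, Finsupp.smul_apply, Finsupp.single_eq_same,
    smul_eq_mul, mul_one] at hcoeff
  exact mul_right_cancel₀ (T_sub_T_neg_ne_zero hef) hcoeff

end QuantumTorus

/-- Let `T` be the quantum torus of an invertible skew-symmetric integer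
matrix `Λ`. If `g` is a `ℤ[q^{±1/2}]`-linear map with `[g x, y] = [x, g y]` and
`g X^e = k_e • X^e` for all `e`, then all `k_e` with `e ≠ 0` coincide. -/
theorem stmt15 {n : ℕ} (Λ : Matrix (Fin n) (Fin n) ℤ) (hΛ : Λᵀ = -Λ)
    (hinv : IsUnit ((Λ.map (Int.cast : ℤ → ℚ)).det))
    (T : Type*) [Ring T] [Algebra (LaurentPolynomial ℤ) T]
    (b : Module.Basis (Fin n → ℤ) (LaurentPolynomial ℤ) T)
    (hmul : ∀ e f, b e * b f =
      ((LaurentPolynomial.T (e ⬝ᵥ Λ.mulVec f) : LaurentPolynomial ℤ)) • b (e + f))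
    (g : T →ₗ[LaurentPolynomial ℤ] T)
    (hsym : ∀ x y, g x * y - y * g x = x * g y - g y * x)
    (k : (Fin n → ℤ) → LaurentPolynomial ℤ)
    (hdiag : ∀ e, g (b e) = k e • b e) :
    ∃ k₀ : LaurentPolynomial ℤ, ∀ e : Fin n → ℤ, e ≠ 0 → k e = k₀ :=
  (nondegenerate_of_isUnit_det_map_intCast hinv).exists_const_of_eq_of_dotProduct_mulVec_ne_zero k
    fun _ _ => eigenvalue_eq_of_dotProduct_mulVec_ne_zero hΛ hmul g hsym k hdiag
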